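/- arXiv:0908.0696 — 4 statements merged into one kernel-verified Lean document; each statement's English description precedes it below -/
import Mathlib

section
/- Let (M,L) and (M,L̃) be conformally related Finsler manifolds with g̃ = e^{2σ(x)}g. Then (M,L) is semi-C-reducible if and only if (M,L̃) is semi-C-reducible (with the same scalar functions μ, τ). Consequently, (M,L) is C-reducible if and only if (M,L̃) is C-reducible, and (M,L) is C₂-like if and only if (M,L̃) is C₂-like. -/
/-!
Under the conformal change every term of the semi-C-reducibility condition is multiplied by the
same nonzero factor `e^{2σ}`: the Cartan tensor and the angular metric directly, and `τ / C²`
because `C̃² = e^{-2σ} C²`. Cancelling this factor gives the equivalence for every pair `μ, τ`;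
C-reducibility and being C₂-like are the cases `(μ, τ) = (1, 0)` and `(0, 1)`.
-/

theorem semiCReducible_rhs_conformal {K : Type*} [Field K] (a τ e hXY hYZ hZX cX cY cZ csq : K) :
    a * (e * hXY * cZ + e * hYZ * cX + e * hZX * cY) + τ / (e⁻¹ * csq) * (cX * cY * cZ)
      = e * (a * (hXY * cZ + hYZ * cX + hZX * cY) + τ / csq * (cX * cY * cZ)) := by
  rw [div_mul_eq_div_div, div_inv_eq_mul]
  ring

theorem semi_C_reducible_conformally_invariant_general
    {M TM V : Type*}
    (n : ℕ)
    (σ : M → ℝ) (proj : TM → M)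
    (T Tt : V → V → V → TM → ℝ)
    (hb hbt : V → V → TM → ℝ)
    (C Ct : V → TM → ℝ)
    (Csq Csqt : TM → ℝ)
    -- conformal change: T̃ = e^{2σ}T, ℏ̃ = e^{2σ}ℏ, C̃ = C, C̃² = e^{−2σ}C²
    (hTt : ∀ X Y Z u, Tt X Y Z u = Real.exp (2 * σ (proj u)) * T X Y Z u)
    (hhbt : ∀ X Y u, hbt X Y u = Real.exp (2 * σ (proj u)) * hb X Y u)
    (hCt : ∀ X, Ct X = C X)
    (hCsqt : ∀ u, Csqt u = Real.exp (-(2 * σ (proj u))) * Csq u) :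
    -- semi-C-reducibility, with the same scalar functions μ, τ (μ + τ = 1)
    (∀ μ τ : TM → ℝ, (∀ u, μ u + τ u = 1) →
      ((∀ X Y Z u, T X Y Z u =
          μ u / ((n : ℝ) + 1) *
            (hb X Y u * C Z u + hb Y Z u * C X u + hb Z X u * C Y u)
          + τ u / Csq u * (C X u * C Y u * C Z u))
        ↔ (∀ X Y Z u, Tt X Y Z u =
            μ u / ((n : ℝ) + 1) *
              (hbt X Y u * Ct Z u + hbt Y Z u * Ct X u + hbt Z X u * Ct Y u)
            + τ u / Csqt u * (Ct X u * Ct Y u * Ct Z u))))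
    ∧
    -- C-reducibility is conformally invariant
    ((∀ X Y Z u, T X Y Z u =
        1 / ((n : ℝ) + 1) *
          (hb X Y u * C Z u + hb Y Z u * C X u + hb Z X u * C Y u))
      ↔ (∀ X Y Z u, Tt X Y Z u =
          1 / ((n : ℝ) + 1) *
            (hbt X Y u * Ct Z u + hbt Y Z u * Ct X u + hbt Z X u * Ct Y u)))
    ∧
    -- being C₂-like is conformally invariant
    ((∀ X Y Z u, T X Y Z u = 1 / Csq u * (C X u * C Y u * C Z u))
      ↔ (∀ X Y Z u, Tt X Y Z u = 1 / Csqt u * (Ct X u * Ct Y u * Ct Z u))) := by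
  have semi : ∀ μ τ : TM → ℝ,
      (∀ X Y Z u, T X Y Z u =
          μ u / ((n : ℝ) + 1) *
            (hb X Y u * C Z u + hb Y Z u * C X u + hb Z X u * C Y u)
          + τ u / Csq u * (C X u * C Y u * C Z u))
        ↔ (∀ X Y Z u, Tt X Y Z u =
            μ u / ((n : ℝ) + 1) *
              (hbt X Y u * Ct Z u + hbt Y Z u * Ct X u + hbt Z X u * Ct Y u)
            + τ u / Csqt u * (Ct X u * Ct Y u * Ct Z u)) := fun μ τ =>
    forall₄_congr fun X Y Z u => by
      rw [hTt, hhbt, hhbt, hhbt, hCt, hCt, hCt, hCsqt, Real.exp_neg,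
        semiCReducible_rhs_conformal, mul_right_inj' (Real.exp_ne_zero _)]
  refine ⟨fun μ τ _ => semi μ τ, ?_, ?_⟩
  · simpa only [zero_div, zero_mul, add_zero] using semi (fun _ => 1) (fun _ => 0)
  · simpa only [zero_div, zero_mul, zero_add] using semi (fun _ => 0) (fun _ => 1)

theorem semi_C_reducible_conformally_invariant
    {M TM V : Type*}
    (n : ℕ) (hn : 3 ≤ n)
    (σ : M → ℝ) (proj : TM → M)
    (T Tt : V → V → V → TM → ℝ)
    (hb hbt : V → V → TM → ℝ)
    (C Ct : V → TM → ℝ)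
    (Csq Csqt : TM → ℝ)
    -- conformal change: T̃ = e^{2σ}T, ℏ̃ = e^{2σ}ℏ, C̃ = C, C̃² = e^{−2σ}C²
    (hTt : ∀ X Y Z u, Tt X Y Z u = Real.exp (2 * σ (proj u)) * T X Y Z u)
    (hhbt : ∀ X Y u, hbt X Y u = Real.exp (2 * σ (proj u)) * hb X Y u)
    (hCt : ∀ X, Ct X = C X)
    (hCsqt : ∀ u, Csqt u = Real.exp (-(2 * σ (proj u))) * Csq u) :
    -- semi-C-reducibility, with the same scalar functions μ, τ (μ + τ = 1)
    (∀ μ τ : TM → ℝ, (∀ u, μ u + τ u = 1) →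
      ((∀ X Y Z u, T X Y Z u =
          μ u / ((n : ℝ) + 1) *
            (hb X Y u * C Z u + hb Y Z u * C X u + hb Z X u * C Y u)
          + τ u / Csq u * (C X u * C Y u * C Z u))
        ↔ (∀ X Y Z u, Tt X Y Z u =
            μ u / ((n : ℝ) + 1) *
              (hbt X Y u * Ct Z u + hbt Y Z u * Ct X u + hbt Z X u * Ct Y u)
            + τ u / Csqt u * (Ct X u * Ct Y u * Ct Z u))))
    ∧
    -- C-reducibility is conformally invariant
    ((∀ X Y Z u, T X Y Z u =
        1 / ((n : ℝ) + 1) *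
          (hb X Y u * C Z u + hb Y Z u * C X u + hb Z X u * C Y u))
      ↔ (∀ X Y Z u, Tt X Y Z u =
          1 / ((n : ℝ) + 1) *
            (hbt X Y u * Ct Z u + hbt Y Z u * Ct X u + hbt Z X u * Ct Y u)))
    ∧
    -- being C₂-like is conformally invariant
    ((∀ X Y Z u, T X Y Z u = 1 / Csq u * (C X u * C Y u * C Z u))
      ↔ (∀ X Y Z u, Tt X Y Z u = 1 / Csqt u * (Ct X u * Ct Y u * Ct Z u))) :=
  semi_C_reducible_conformally_invariant_general n σ proj T Tt hb hbt C Ct Csq Csqt hTt hhbt hCt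
    hCsqt
end

section
/- Let (M,L) and (M,L̃) be conformally related Finsler manifolds with g̃ = e^{2σ(x)}g. Then (M,L) is quasi-C-reducible if and only if (M,L̃) is quasi-C-reducible. -/
/-!
Under a conformal change the Cartan tensor is multiplied by the nowhere-vanishing function
`e^{2σ}` while the contracted torsion is unchanged, so a quasi-C-reducible decomposition
`T = A ⊙ C` of one tensor gives `e^{±2σ} A` as the decomposing form of the other.
-/

section QuasiCReducible

variable {V P R : Type*}

def IsQuasiCReducible [CommRing R] (T : V → V → V → P → R) (C : V → P → R) (η : V) : Prop :=
  ∃ A : V → V → P → R,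
    (∀ X Y, A X Y = A Y X) ∧ (∀ X, A X η = 0) ∧
    (∀ X Y Z u, T X Y Z u = A X Y u * C Z u + A Y Z u * C X u + A Z X u * C Y u)

theorem IsQuasiCReducible.mul_left [CommRing R] {T : V → V → V → P → R} {C : V → P → R}
    {η : V} (h : IsQuasiCReducible T C η) (f : P → R) :
    IsQuasiCReducible (fun X Y Z u => f u * T X Y Z u) C η := by
  obtain ⟨A, hsymm, hind, hT⟩ := h
  refine ⟨fun X Y u => f u * A X Y u, fun X Y => ?_, fun X => ?_, fun X Y Z u => ?_⟩
  · simp only [hsymm X Y]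
  · simp only [hind X, Pi.zero_apply, mul_zero]
    rfl
  · simp only [hT X Y Z u]
    ring

theorem isQuasiCReducible_mul_left_iff [Field R] {T : V → V → V → P → R} {C : V → P → R}
    {η : V} {f : P → R} (hf : ∀ u, f u ≠ 0) :
    IsQuasiCReducible (fun X Y Z u => f u * T X Y Z u) C η ↔ IsQuasiCReducible T C η := by
  refine ⟨fun h => ?_, fun h => h.mul_left f⟩
  have hT : T = fun X Y Z u => (f u)⁻¹ * (f u * T X Y Z u) := by
    funext X Y Z u
    rw [inv_mul_cancel_left₀ (hf u)]
  rw [hT]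
  exact h.mul_left fun u => (f u)⁻¹

end QuasiCReducible

theorem quasi_C_reducible_conformally_invariant_general
    {M TM V : Type*}
    (σ : M → ℝ) (proj : TM → M)
    (T Tt : V → V → V → TM → ℝ)
    (C Ct : V → TM → ℝ)
    (η : V)
    -- conformal change: T̃ = e^{2σ}T, C̃ = C
    (hTt : ∀ X Y Z u, Tt X Y Z u = Real.exp (2 * σ (proj u)) * T X Y Z u)
    (hCt : ∀ X, Ct X = C X) :
    (∃ A : V → V → TM → ℝ,
        (∀ X Y, A X Y = A Y X) ∧ (∀ X, A X η = 0) ∧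
        (∀ X Y Z u, T X Y Z u =
          A X Y u * C Z u + A Y Z u * C X u + A Z X u * C Y u))
      ↔ (∃ A : V → V → TM → ℝ,
          (∀ X Y, A X Y = A Y X) ∧ (∀ X, A X η = 0) ∧
          (∀ X Y Z u, Tt X Y Z u =
            A X Y u * Ct Z u + A Y Z u * Ct X u + A Z X u * Ct Y u)) := by
  have hTt' : Tt = fun X Y Z u => Real.exp (2 * σ (proj u)) * T X Y Z u := by
    funext X Y Z u
    exact hTt X Y Z u
  have hCt' : Ct = C := funext hCt
  subst hTt' hCt'
  exact (isQuasiCReducible_mul_left_iff fun u => Real.exp_ne_zero _).symm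

theorem quasi_C_reducible_conformally_invariant
    {M TM V : Type*}
    (n : ℕ) (hn : 3 ≤ n)
    (σ : M → ℝ) (proj : TM → M)
    (T Tt : V → V → V → TM → ℝ)
    (C Ct : V → TM → ℝ)
    (η : V)
    -- conformal change: T̃ = e^{2σ}T, C̃ = C
    (hTt : ∀ X Y Z u, Tt X Y Z u = Real.exp (2 * σ (proj u)) * T X Y Z u)
    (hCt : ∀ X, Ct X = C X) :
    (∃ A : V → V → TM → ℝ,
        (∀ X Y, A X Y = A Y X) ∧ (∀ X, A X η = 0) ∧
        (∀ X Y Z u, T X Y Z u =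
          A X Y u * C Z u + A Y Z u * C X u + A Z X u * C Y u))
      ↔ (∃ A : V → V → TM → ℝ,
          (∀ X Y, A X Y = A Y X) ∧ (∀ X, A X η = 0) ∧
          (∀ X Y Z u, Tt X Y Z u =
            A X Y u * Ct Z u + A Y Z u * Ct X u + A Z X u * Ct Y u)) :=
  quasi_C_reducible_conformally_invariant_general σ proj T Tt C Ct η hTt hCt
end

section
/- Let (M,L) and (M,L̃) be conformally related Finsler manifolds with g̃ = e^{2σ(x)}g. Then (M,L) is S₃-like if and only if (M,L̃) is S₃-like, and (M,L) is S₄-like if and only if (M,L̃) is S₄-like. -/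
/-!
`V` stands for the π-vector fields of the `n`-dimensional Finsler manifold `(M,L)` and `TM`
for `𝒯M`; tensors are evaluated pointwise at `u : TM`, with `S`, `hb`, `Ricv`, `Scv` the
data of `(M,L)` and `St`, `hbt`, `Ricvt`, `Scvt` those of `(M,L̃)`.

Under the conformal change both sides of the defining identity of S₃-likeness, and both
sides of that of S₄-likeness, get multiplied by the same factor `e^{2σ}`: for S₃ because
`Scᵛ ℏ` is invariant and the remaining `ℏ` scales, for S₄ because `F` is invariant and `ℏ`
scales. As `e^{2σ} ≠ 0`, each identity holds before the change iff it holds after it.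
-/

section ConformalRescaling

variable {V TM : Type*}

theorem forall_eq_iff_of_eq_mul {T T' R R' : V → V → V → V → TM → ℝ} (c : TM → ℝ)
    (hc : ∀ u, c u ≠ 0)
    (hT : ∀ X Y Z W u, T' X Y Z W u = c u * T X Y Z W u)
    (hR : ∀ X Y Z W u, R' X Y Z W u = c u * R X Y Z W u) :
    (∀ X Y Z W u, T X Y Z W u = R X Y Z W u) ↔
      (∀ X Y Z W u, T' X Y Z W u = R' X Y Z W u) := by
  refine forall₅_congr fun X Y Z W u => ?_
  rw [hT, hR, mul_right_inj' (hc u)]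

theorem constCurvatureForm_eq_mul {h ht : V → V → TM → ℝ} {κ κt c : TM → ℝ}
    (hh : ∀ X Y u, ht X Y u = c u * h X Y u)
    (hκ : ∀ X Y u, κt u * ht X Y u = κ u * h X Y u) (d : ℝ) (X Y Z W : V) (u : TM) :
    κt u / d * (ht X Z u * ht Y W u - ht X W u * ht Y Z u) =
      c u * (κ u / d * (h X Z u * h Y W u - h X W u * h Y Z u)) :=
  calc κt u / d * (ht X Z u * ht Y W u - ht X W u * ht Y Z u)
      = ((κt u * ht X Z u) * ht Y W u - (κt u * ht X W u) * ht Y Z u) / d := by ring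
    _ = ((κ u * h X Z u) * (c u * h Y W u) - (κ u * h X W u) * (c u * h Y Z u)) / d := by
        rw [hκ, hκ, hh, hh]
    _ = c u * (κ u / d * (h X Z u * h Y W u - h X W u * h Y Z u)) := by ring

theorem kulkarniNomizu_eq_mul {h ht F Ft : V → V → TM → ℝ} {c : TM → ℝ}
    (hh : ∀ X Y u, ht X Y u = c u * h X Y u) (hF : ∀ X Y u, Ft X Y u = F X Y u)
    (X Y Z W : V) (u : TM) :
    ht X Z u * Ft Y W u - ht Y Z u * Ft X W u + ht Y W u * Ft X Z u - ht X W u * Ft Y Z u =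
      c u * (h X Z u * F Y W u - h Y Z u * F X W u + h Y W u * F X Z u - h X W u * F Y Z u) := by
  simp only [hh, hF]
  ring

end ConformalRescaling

theorem S3_S4_like_conformally_invariant
    {M TM V : Type*}
    (n : ℕ)
    (σ : M → ℝ) (proj : TM → M)
    (S St : V → V → V → V → TM → ℝ)
    (hb hbt : V → V → TM → ℝ)
    (Ricv Ricvt : V → V → TM → ℝ)
    (Scv Scvt : TM → ℝ)
    -- conformal change: S̃ = e^{2σ}S (as a (0,4)-tensor), ℏ̃ = e^{2σ}ℏ
    (hSt : ∀ X Y Z Wb u, St X Y Z Wb u = Real.exp (2 * σ (proj u)) * S X Y Z Wb u)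
    (hhbt : ∀ X Y u, hbt X Y u = Real.exp (2 * σ (proj u)) * hb X Y u)
    -- Scᵛ·ℏ is conformally invariant
    (hScvhb : ∀ X Y u, Scvt u * hbt X Y u = Scv u * hb X Y u)
    -- F := (1/(n−3)){Ricᵛ − Scᵛℏ/(2(n−2))} is conformally invariant
    (hF : ∀ X Y u,
      ((n : ℝ) - 3)⁻¹ * (Ricvt X Y u - Scvt u * hbt X Y u / (2 * ((n : ℝ) - 2)))
        = ((n : ℝ) - 3)⁻¹ * (Ricv X Y u - Scv u * hb X Y u / (2 * ((n : ℝ) - 2)))) :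
    let F : V → V → TM → ℝ := fun X Y u =>
      ((n : ℝ) - 3)⁻¹ * (Ricv X Y u - Scv u * hb X Y u / (2 * ((n : ℝ) - 2)))
    let Ft : V → V → TM → ℝ := fun X Y u =>
      ((n : ℝ) - 3)⁻¹ * (Ricvt X Y u - Scvt u * hbt X Y u / (2 * ((n : ℝ) - 2)))
    -- (M,L) is S₃-like (dim M ≥ 4) iff (M,L̃) is S₃-like
    ((4 ≤ n) →
      ((∀ X Y Z Wb u, S X Y Z Wb u =
          Scv u / (((n : ℝ) - 1) * ((n : ℝ) - 2)) *
            (hb X Z u * hb Y Wb u - hb X Wb u * hb Y Z u))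
        ↔ (∀ X Y Z Wb u, St X Y Z Wb u =
            Scvt u / (((n : ℝ) - 1) * ((n : ℝ) - 2)) *
              (hbt X Z u * hbt Y Wb u - hbt X Wb u * hbt Y Z u))))
    ∧
    -- (M,L) is S₄-like (dim M ≥ 5) iff (M,L̃) is S₄-like
    ((5 ≤ n) →
      ((∀ X Y Z Wb u, S X Y Z Wb u =
          hb X Z u * F Y Wb u - hb Y Z u * F X Wb u
            + hb Y Wb u * F X Z u - hb X Wb u * F Y Z u)
        ↔ (∀ X Y Z Wb u, St X Y Z Wb u =
            hbt X Z u * Ft Y Wb u - hbt Y Z u * Ft X Wb u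
              + hbt Y Wb u * Ft X Z u - hbt X Wb u * Ft Y Z u))) := by
  intro F Ft
  have hexp : ∀ u, Real.exp (2 * σ (proj u)) ≠ 0 := fun u => Real.exp_ne_zero _
  have hFt : ∀ X Y u, Ft X Y u = F X Y u := hF
  exact ⟨fun _ => forall_eq_iff_of_eq_mul _ hexp hSt (constCurvatureForm_eq_mul hhbt hScvhb _),
    fun _ => forall_eq_iff_of_eq_mul _ hexp hSt (kulkarniNomizu_eq_mul hhbt hFt)⟩
end

section
/- Let (M,L) and (M,L̃) be conformally related Finsler manifolds with g̃ = e^{2σ(x)}g, and assume that the π-tensor field H satisfies H(η̄,X̄)η̄ = 0 for all X̄. Then (M,L) is of scalar curvature if and only if (M,L̃) is of scalar curvature; moreover, if R(η̄,X̄,η̄,Ȳ) = kL²ℏ(X̄,Ȳ) then R̃(η̄,X̄,η̄,Ȳ) = k₀L̃²ℏ̃(X̄,Ȳ) with k₀ = e^{−2σ(x)}k. -/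
/-!
Since `H(η̄,X̄)η̄ = 0`, the conformal change leaves `R(η̄,X̄)η̄` unchanged. Hence in
`g̃(R̃(η̄,X̄)η̄,Ȳ) = k₀ L̃² ℏ̃(X̄,Ȳ)` the left side is `e^{2σ}` times that of the equation for `L`,
while the right side picks up `e^{2σ}` twice (from `L̃²` and `ℏ̃`); so the two equations are
equivalent exactly when `k = e^{2σ} k₀`.
-/

section ScalarCurvature

variable {TM V : Type*}

def HasScalarCurvature (g hb : V → V → TM → ℝ) (L : TM → ℝ) (R : V → V → V → V) (η : V)
    (k : TM → ℝ) : Prop :=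
  ∀ X Y u, g (R η X η) Y u = k u * L u ^ 2 * hb X Y u

theorem hasScalarCurvature_congr {g hb : V → V → TM → ℝ} {L : TM → ℝ} {R R' : V → V → V → V}
    {η : V} {k : TM → ℝ} (h : ∀ X, R' η X η = R η X η) :
    HasScalarCurvature g hb L R' η k ↔ HasScalarCurvature g hb L R η k := by
  simp only [HasScalarCurvature, h]

theorem mul_eq_mul_mul_mul_iff {c x k l h : ℝ} (hc : c ≠ 0) :
    c * x = k * (c * l) * (c * h) ↔ x = c * k * l * h := by
  rw [show k * (c * l) * (c * h) = c * (c * k * l * h) by ring, mul_right_inj' hc]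

theorem hasScalarCurvature_conformal_iff {g gt hb hbt : V → V → TM → ℝ} {L Lt c : TM → ℝ}
    {R : V → V → V → V} {η : V} (hc : ∀ u, c u ≠ 0)
    (hg : ∀ X Y u, gt X Y u = c u * g X Y u) (hL : ∀ u, Lt u ^ 2 = c u * L u ^ 2)
    (hh : ∀ X Y u, hbt X Y u = c u * hb X Y u) (k : TM → ℝ) :
    HasScalarCurvature gt hbt Lt R η k ↔ HasScalarCurvature g hb L R η (c * k) := by
  refine forall_congr' fun X => forall_congr' fun Y => forall_congr' fun u => ?_
  rw [hg, hL, hh, Pi.mul_apply]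
  exact mul_eq_mul_mul_mul_iff (hc u)

end ScalarCurvature

theorem scalar_curvature_conformally_invariant_general
    {M TM V : Type*} [AddCommGroup V]
    (σ : M → ℝ) (proj : TM → M)
    (g gt : V → V → TM → ℝ)
    (hb hbt : V → V → TM → ℝ)
    (L Lt : TM → ℝ)
    (R Rt H : V → V → V → V)
    (η : V)
    -- conformal change: g̃ = e^{2σ}g, L̃² = e^{2σ}L², ℏ̃ = e^{2σ}ℏ
    (hconf : ∀ X Y u, gt X Y u = Real.exp (2 * σ (proj u)) * g X Y u)
    (hLt : ∀ u, (Lt u) ^ 2 = Real.exp (2 * σ (proj u)) * (L u) ^ 2)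
    (hhbt : ∀ X Y u, hbt X Y u = Real.exp (2 * σ (proj u)) * hb X Y u)
    -- conformal change of the Cartan h-curvature: R̃(X̄,Ȳ)Z̄ = R(X̄,Ȳ)Z̄ + H(X̄,Ȳ)Z̄
    (hRt : ∀ X Y Z, Rt X Y Z = R X Y Z + H X Y Z)
    -- assumption: H(η̄,X̄)η̄ = 0
    (hH : ∀ X, H η X η = 0) :
    -- (M,L) is of scalar curvature iff (M,L̃) is of scalar curvature
    ((∃ k : TM → ℝ, ∀ X Y u,
        g (R η X η) Y u = k u * (L u) ^ 2 * hb X Y u)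
      ↔ (∃ k : TM → ℝ, ∀ X Y u,
          gt (Rt η X η) Y u = k u * (Lt u) ^ 2 * hbt X Y u))
    ∧
    -- moreover, if R(η̄,X̄,η̄,Ȳ) = k L² ℏ(X̄,Ȳ), then
    -- R̃(η̄,X̄,η̄,Ȳ) = k₀ L̃² ℏ̃(X̄,Ȳ) with k₀ = e^{−2σ(x)} k
    (∀ k : TM → ℝ,
      (∀ X Y u, g (R η X η) Y u = k u * (L u) ^ 2 * hb X Y u) →
      (∀ X Y u, gt (Rt η X η) Y u =
        (Real.exp (-(2 * σ (proj u))) * k u) * (Lt u) ^ 2 * hbt X Y u)) := by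
  set c : TM → ℝ := fun u => Real.exp (2 * σ (proj u))
  have hR : ∀ X, Rt η X η = R η X η := fun X => by rw [hRt, hH, add_zero]
  have hscale : ∀ k, HasScalarCurvature gt hbt Lt Rt η k ↔ HasScalarCurvature g hb L R η (c * k) :=
    fun k => (hasScalarCurvature_congr hR).trans
      (hasScalarCurvature_conformal_iff (fun u => (Real.exp_pos _).ne') hconf hLt hhbt k)
  have hcancel : ∀ k : TM → ℝ, c * (fun u => Real.exp (-(2 * σ (proj u))) * k u) = k := by
    intro k; funext u
    simp only [c, Pi.mul_apply, ← mul_assoc, ← Real.exp_add, add_neg_cancel, Real.exp_zero, one_mul]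
  have hdown : ∀ k, HasScalarCurvature g hb L R η k →
      HasScalarCurvature gt hbt Lt Rt η fun u => Real.exp (-(2 * σ (proj u))) * k u :=
    fun k hk => (hscale _).2 (by rwa [hcancel])
  exact ⟨⟨fun ⟨k, hk⟩ => ⟨_, hdown k hk⟩, fun ⟨k, hk⟩ => ⟨_, (hscale k).1 hk⟩⟩, hdown⟩

theorem scalar_curvature_conformally_invariant
    {M TM V : Type*} [AddCommGroup V] [Module (TM → ℝ) V]
    (σ : M → ℝ) (proj : TM → M)
    (g gt : V → V → TM → ℝ)
    (hb hbt : V → V → TM → ℝ)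
    (L Lt : TM → ℝ)
    (R Rt H : V → V → V → V)
    (η : V)
    -- conformal change: g̃ = e^{2σ}g, L̃² = e^{2σ}L², ℏ̃ = e^{2σ}ℏ
    (hconf : ∀ X Y u, gt X Y u = Real.exp (2 * σ (proj u)) * g X Y u)
    (hLt : ∀ u, (Lt u) ^ 2 = Real.exp (2 * σ (proj u)) * (L u) ^ 2)
    (hhbt : ∀ X Y u, hbt X Y u = Real.exp (2 * σ (proj u)) * hb X Y u)
    -- conformal change of the Cartan h-curvature: R̃(X̄,Ȳ)Z̄ = R(X̄,Ȳ)Z̄ + H(X̄,Ȳ)Z̄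
    (hRt : ∀ X Y Z, Rt X Y Z = R X Y Z + H X Y Z)
    -- assumption: H(η̄,X̄)η̄ = 0
    (hH : ∀ X, H η X η = 0) :
    -- (M,L) is of scalar curvature iff (M,L̃) is of scalar curvature
    ((∃ k : TM → ℝ, ∀ X Y u,
        g (R η X η) Y u = k u * (L u) ^ 2 * hb X Y u)
      ↔ (∃ k : TM → ℝ, ∀ X Y u,
          gt (Rt η X η) Y u = k u * (Lt u) ^ 2 * hbt X Y u))
    ∧
    -- moreover, if R(η̄,X̄,η̄,Ȳ) = k L² ℏ(X̄,Ȳ), then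
    -- R̃(η̄,X̄,η̄,Ȳ) = k₀ L̃² ℏ̃(X̄,Ȳ) with k₀ = e^{−2σ(x)} k
    (∀ k : TM → ℝ,
      (∀ X Y u, g (R η X η) Y u = k u * (L u) ^ 2 * hb X Y u) →
      (∀ X Y u, gt (Rt η X η) Y u =
        (Real.exp (-(2 * σ (proj u))) * k u) * (Lt u) ^ 2 * hbt X Y u)) :=
  scalar_curvature_conformally_invariant_general σ proj g gt hb hbt L Lt R Rt H η hconf hLt hhbt hRt
    hH
end
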